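/- arXiv:1611.01609 — 2 statements merged into one kernel-verified Lean document; each statement's English description precedes it below -/
import Mathlib

section
/- Let G be a finite simple graph on at least 3 vertices, let v and u be distinct vertices of G, and set S = V(G)∖{v,u}. Suppose S is an anchor of G and that every automorphism α of the induced subgraph G[S] satisfies α(N_G(v) ∩ S) = N_G(v) ∩ S. Then G is reconstructible. -/
/-- An *anchor* of `G` is a proper subset `S ⊊ V(G)` such that the induced
subgraph `G[S]` occurs exactly once in `G`: every `T` with `G[T] ≅ G[S]`
satisfies `T = S`. -/
def IsAnchor {V : Type} (G : SimpleGraph V) (S : Set V) : Prop :=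
  S ≠ Set.univ ∧ ∀ T : Set V, Nonempty (G.induce T ≃g G.induce S) → T = S

/-- Two graphs are *hypomorphic* if there is a bijection `σ` between their
vertex sets such that `G − v ≅ G′ − σ(v)` for every vertex `v`. -/
def Hypomorphic {V W : Type} [Fintype V] [Fintype W]
    (G : SimpleGraph V) (G' : SimpleGraph W) : Prop :=
  ∃ σ : V ≃ W, ∀ v : V,
    Nonempty (G.induce ({v}ᶜ : Set V) ≃g G'.induce ({σ v}ᶜ : Set W))

/-- A graph is *reconstructible* if every graph hypomorphic to it is
isomorphic to it. -/
def Reconstructible {V : Type} [Fintype V] (G : SimpleGraph V) : Prop :=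
  ∀ (W : Type) [Fintype W] (G' : SimpleGraph W), Hypomorphic G G' → Nonempty (G ≃g G')


/-!
Let `G'` be hypomorphic to `G` via `σ`. Since `G[S]` occurs only once in `G`, every induced copy
of `G[S]` in `G'` is `σ(S)`: a copy missing some `σ y` with `y ∈ S` would pull back along
`G' - σ y ≅ G - y` to a second copy of `G[S]` in `G`. Hence `φ : G - u ≅ G' - σ u` and
`ψ : G - v ≅ G' - σ v` both map `S` onto `σ(S)`, so `φ v = σ v` and `φ⁻¹ ∘ ψ` is an automorphism
of `G[S]`; as it preserves `N(v) ∩ S`, the map `ψ` respects adjacency to `v` on `S`. Kelly's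
lemma gives `|E(G)| = |E(G')|`, hence `deg v = deg (σ v)`; counting neighbours then settles the
one remaining pair `v, u`, and `ψ` extended by `v ↦ σ v` is an isomorphism `G ≅ G'`.
-/

open Finset

theorem Fintype.iff_of_card_filter_eq_of_forall_ne {α : Type*} [Fintype α] [DecidableEq α]
    {p q : α → Prop} [DecidablePred p] [DecidablePred q] (h : #{x | p x} = #{x | q x}) (a : α)
    (hne : ∀ x ≠ a, p x ↔ q x) : p a ↔ q a := by
  have hrest : ∑ x ∈ {a}ᶜ, (if p x then 1 else 0) = ∑ x ∈ {a}ᶜ, (if q x then 1 else 0) :=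
    Finset.sum_congr rfl fun x hx => if_congr (hne x (by simpa using hx)) rfl rfl
  rw [card_filter, card_filter, Fintype.sum_eq_add_sum_compl a, Fintype.sum_eq_add_sum_compl a,
    hrest] at h
  by_cases hp : p a <;> by_cases hq : q a <;> simp [hp, hq] at h ⊢

namespace SimpleGraph

variable {U V W : Type*} {G : SimpleGraph V} {G' : SimpleGraph W}

theorem Embedding.exists_iso_apply_eq_of_range_eq {H : SimpleGraph U} (f g : H ↪g G)
    (h : Set.range g = Set.range f) : ∃ α : H ≃g H, ∀ x, f (α x) = g x :=
  ⟨(g.isoInduceRange.trans (Iso.refl.induce (h ▸ Set.bijOn_id _))).trans f.isoInduceRange.symm,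
    fun _ => congrArg Subtype.val (f.isoInduceRange.apply_symm_apply _)⟩

abbrev Iso.restrictEmbedding {s r : Set V} {t : Set W} (e : G.induce s ≃g G'.induce t)
    (h : r ⊆ s) : G.induce r ↪g G' :=
  (Embedding.induce t).comp (e.toEmbedding.comp (G.induceHomOfLE h))

theorem nonempty_iso_of_adj_iff (f : V ≃ W) (v : V)
    (hrest : ∀ a b, a ≠ v → b ≠ v → (G'.Adj (f a) (f b) ↔ G.Adj a b))
    (hv : ∀ x, G'.Adj (f v) (f x) ↔ G.Adj v x) : Nonempty (G ≃g G') := by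
  refine ⟨⟨f, fun {a b} => ?_⟩⟩
  by_cases ha : a = v
  · subst ha; exact hv b
  by_cases hb : b = v
  · subst hb; rw [G'.adj_comm, G.adj_comm]; exact hv a
  exact hrest a b ha hb

section Finite

variable [Fintype V] [Fintype W] [DecidableEq V] [DecidableEq W]
  [DecidableRel G.Adj] [DecidableRel G'.Adj]

variable (G) in
theorem card_edgeFinset_induce_compl_add_degree (x : V) :
    #(G.induce {x}ᶜ).edgeFinset + G.degree x = #G.edgeFinset := by
  rw [card_edgeFinset_induce_compl_singleton, card_edgeFinset_deleteIncidenceSet,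
    Nat.sub_add_cancel (G.degree_le_card_edgeFinset x)]

variable (G) in
theorem sum_card_edgeFinset_induce_compl_add :
    ∑ x, #(G.induce {x}ᶜ).edgeFinset + 2 * #G.edgeFinset = Fintype.card V * #G.edgeFinset := by
  rw [← sum_degrees_eq_twice_card_edges, ← sum_add_distrib,
    sum_congr rfl fun x _ => card_edgeFinset_induce_compl_add_degree G x, sum_const, card_univ,
    smul_eq_mul]

theorem degree_eq_of_iso_induce_compl (hE : #G.edgeFinset = #G'.edgeFinset) {v : V} {w : W}
    (e : G.induce {v}ᶜ ≃g G'.induce {w}ᶜ) : G.degree v = G'.degree w := by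
  have hv := card_edgeFinset_induce_compl_add_degree G v
  have hw := card_edgeFinset_induce_compl_add_degree G' w
  have := e.card_edgeFinset_eq
  omega

theorem nonempty_iso_of_iso_induce_compl_of_degree_eq {v : V} {w : W}
    (e : G.induce {v}ᶜ ≃g G'.induce {w}ᶜ) (hdeg : G.degree v = G'.degree w) (u : V)
    (hadj : ∀ x : ({v}ᶜ : Set V), (x : V) ≠ u → (G'.Adj w (e x) ↔ G.Adj v x)) :
    Nonempty (G ≃g G') := by
  let e' : {x // x ≠ v} ≃ {y // y ≠ w} := e.toEquiv
  let f : V ≃ W :=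
    (Equiv.optionSubtypeNe v).symm.trans (e'.optionCongr.trans (Equiv.optionSubtypeNe w))
  have hfv : f v = w := by simp [f]
  have hf : ∀ x (hx : x ≠ v), f x = e' ⟨x, hx⟩ := by
    intro x hx
    simp [f, Equiv.optionSubtypeNe_symm_of_ne hx]
  have hne : ∀ x ≠ u, G.Adj v x ↔ G'.Adj (f v) (f x) := by
    intro x hxu
    by_cases hxv : x = v
    · subst hxv; simp
    · rw [hfv, hf x hxv]; exact (hadj ⟨x, hxv⟩ hxu).symm
  have hcard : #{x | G.Adj v x} = #{x | G'.Adj (f v) (f x)} := by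
    rw [← card_neighborFinset_eq_degree, neighborFinset_eq_filter,
      ← card_neighborFinset_eq_degree, neighborFinset_eq_filter] at hdeg
    rw [hdeg, hfv]
    exact card_equiv f.symm fun y => by simp
  have hu := Fintype.iff_of_card_filter_eq_of_forall_ne hcard u hne
  refine nonempty_iso_of_adj_iff f v (fun a b ha hb => ?_) fun x => ?_
  · rw [hf a ha, hf b hb]; exact e.map_adj_iff
  · by_cases hxu : x = u
    · subst hxu; exact hu.symm
    · exact (hne x hxu).symm

end Finite

end SimpleGraph

open SimpleGraph

section Hypomorphic

variable {V W : Type} [Fintype V] [Fintype W] [DecidableEq V] [DecidableEq W]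
  {G : SimpleGraph V} {G' : SimpleGraph W} [DecidableRel G.Adj] [DecidableRel G'.Adj]

theorem Hypomorphic.card_edgeFinset_eq (h : Hypomorphic G G') (hV : 3 ≤ Fintype.card V) :
    #G.edgeFinset = #G'.edgeFinset := by
  obtain ⟨σ, hσ⟩ := h
  have hsum : ∑ x, #(G.induce {x}ᶜ).edgeFinset = ∑ y, #(G'.induce {y}ᶜ).edgeFinset := by
    rw [← σ.sum_comp]
    exact sum_congr rfl fun x _ => (hσ x).some.card_edgeFinset_eq
  have hG := sum_card_edgeFinset_induce_compl_add G
  have hG' := sum_card_edgeFinset_induce_compl_add G'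
  rw [← Fintype.card_congr σ, ← hsum] at hG'
  obtain ⟨k, hk⟩ := Nat.exists_eq_add_of_le' hV
  rw [hk] at hG hG'
  exact Nat.eq_of_mul_eq_mul_left k.succ_pos (by linarith)

end Hypomorphic

section Anchor

variable {V W : Type} {G : SimpleGraph V} {G' : SimpleGraph W} {S : Set V}

theorem IsAnchor.range_eq (hS : IsAnchor G S) (f : G.induce S ↪g G) : Set.range f = S :=
  hS.2 _ ⟨f.isoInduceRange.symm⟩

theorem IsAnchor.image_subset_range (hS : IsAnchor G S) (σ : V ≃ W)
    (hσ : ∀ x, Nonempty (G.induce {x}ᶜ ≃g G'.induce {σ x}ᶜ)) (f : G.induce S ↪g G') :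
    σ '' S ⊆ Set.range f := by
  rintro _ ⟨y, hyS, rfl⟩
  by_contra hy
  have hf : Set.range f ⊆ {σ y}ᶜ := by
    rintro _ ⟨x, rfl⟩ hx
    exact hy ⟨x, hx⟩
  let g : G.induce S ↪g G := (Embedding.induce {y}ᶜ).comp
    ((hσ y).some.symm.toEmbedding.comp ((G'.induceHomOfLE hf).comp f.isoInduceRange.toEmbedding))
  have hg : y ∉ Set.range g := by
    rintro ⟨x, hx⟩
    exact ((hσ y).some.symm _).2 hx
  exact hg (by rwa [hS.range_eq g])

theorem IsAnchor.range_eq_image [Finite V] (hS : IsAnchor G S) (σ : V ≃ W)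
    (hσ : ∀ x, Nonempty (G.induce {x}ᶜ ≃g G'.induce {σ x}ᶜ)) (f : G.induce S ↪g G') :
    Set.range f = σ '' S :=
  (Set.eq_of_subset_of_ncard_le (hS.image_subset_range σ hσ f)
    (by rw [Set.ncard_range_of_injective f.injective, Nat.card_coe_set_eq,
      Set.ncard_image_of_injective S σ.injective]) (Set.finite_range f)).symm

theorem IsAnchor.iso_apply_eq [Finite V] (hS : IsAnchor G S) (σ : V ≃ W)
    (hσ : ∀ x, Nonempty (G.induce {x}ᶜ ≃g G'.induce {σ x}ᶜ)) {a b : V} (hab : a ≠ b)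
    (hSab : S = {a, b}ᶜ) (e : G.induce {a}ᶜ ≃g G'.induce {σ a}ᶜ) :
    (e ⟨b, hab.symm⟩ : W) = σ b := by
  have hSa : S ⊆ {a}ᶜ := hSab ▸ Set.compl_subset_compl.mpr (by simp)
  set y := e.symm ⟨σ b, σ.injective.ne hab.symm⟩ with hy
  have hyb : (y : V) = b := by
    by_contra hyb
    have hyS : (y : V) ∈ S := by simp [hSab, hyb, Set.mem_compl_singleton_iff.mp y.2]
    have hmem : σ b ∈ Set.range (e.restrictEmbedding hSa) :=
      ⟨⟨y, hyS⟩, congrArg Subtype.val (e.apply_symm_apply _)⟩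
    rw [hS.range_eq_image σ hσ, σ.injective.mem_set_image, hSab] at hmem
    simp at hmem
  have : e ⟨b, hab.symm⟩ = e y := congrArg e (Subtype.ext hyb.symm)
  rw [this, hy, e.apply_symm_apply]

end Anchor

/-- If `S = V(G)∖{v,u}` is an anchor of `G` and every
automorphism of `G[S]` fixes `N_G(v) ∩ S` setwise, then `G` is
reconstructible. -/
theorem stmt_4 {V : Type} [Fintype V] (G : SimpleGraph V)
    (hcard : 3 ≤ Fintype.card V)
    (v u : V) (hvu : v ≠ u)
    (S : Set V) (hS : S = ({v, u} : Set V)ᶜ)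
    (hanch : IsAnchor G S)
    (hfix : ∀ α : G.induce S ≃g G.induce S, ∀ x : ↥S,
      G.Adj v (x : V) ↔ G.Adj v ((α x : V))) :
    Reconstructible G := by
  classical
  rintro W _ G' ⟨σ, hσ⟩
  obtain ⟨φ⟩ := hσ u
  obtain ⟨ψ⟩ := hσ v
  have hSu : S ⊆ {u}ᶜ := hS ▸ Set.compl_subset_compl.mpr (by simp)
  have hSv : S ⊆ {v}ᶜ := hS ▸ Set.compl_subset_compl.mpr (by simp)
  have hφv : (φ ⟨v, hvu⟩ : W) = σ v :=
    hanch.iso_apply_eq σ hσ hvu.symm (by rw [hS, Set.pair_comm]) φ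
  obtain ⟨α, hα⟩ := (φ.restrictEmbedding hSu).exists_iso_apply_eq_of_range_eq
    (ψ.restrictEmbedding hSv) (by rw [hanch.range_eq_image σ hσ, hanch.range_eq_image σ hσ])
  have hadj : ∀ x : ({v}ᶜ : Set V), (x : V) ≠ u → (G'.Adj (σ v) (ψ x) ↔ G.Adj v x) := by
    intro x hxu
    have hxS : (x : V) ∈ S := by simp [hS, Set.mem_compl_singleton_iff.mp x.2, hxu]
    calc G'.Adj (σ v) (ψ x)
        ↔ G'.Adj (φ ⟨v, hvu⟩) (φ.restrictEmbedding hSu (α ⟨x, hxS⟩)) := by rw [hφv, hα]; rfl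
      _ ↔ G.Adj v (α ⟨x, hxS⟩) := φ.map_adj_iff
      _ ↔ G.Adj v x := (hfix α ⟨x, hxS⟩).symm
  have hE := Hypomorphic.card_edgeFinset_eq ⟨σ, hσ⟩ hcard
  exact nonempty_iso_of_iso_induce_compl_of_degree_eq ψ (degree_eq_of_iso_induce_compl hE ψ) u hadj
end

section
/- Let G and G′ be hypomorphic finite simple graphs on n ≥ 3 vertices and let S be an anchor of G. Then there is exactly one subset T ⊆ V(G′) such that the induced subgraph G′[T] is isomorphic to G[S]. -/
/-- Transport an induced subgraph along a graph isomorphism. -/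
def isoInduce {V W : Type} {G : SimpleGraph V} {H : SimpleGraph W} (e : G ≃g H) (S : Set V) :
    G.induce S ≃g H.induce (⇑e '' S) where
  toEquiv := e.toEquiv.image S
  map_rel_iff' := by
    intro a b
    simp only [Equiv.image, Equiv.coe_fn_mk, SimpleGraph.comap_adj, Equiv.Set.imageOfInjOn]
    exact e.map_adj_iff

/-- An induced subgraph of an induced subgraph is an induced subgraph. -/
noncomputable def induceInduce {V : Type} (G : SimpleGraph V) (A : Set V) (S : Set A) :
    (G.induce A).induce S ≃g G.induce (Subtype.val '' S) where
  toEquiv := Equiv.Set.image Subtype.val S Subtype.val_injective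
  map_rel_iff' := by
    intro a b
    simp [Equiv.Set.image, Equiv.Set.imageOfInjOn]

/-- Pulling a subset `S ⊆ A` through an isomorphism `G[A] ≅ G'[B]` yields a subset of `W`
inducing a graph isomorphic to `G[S]`. -/
noncomputable def pullIso {V W : Type} {G : SimpleGraph V} {G' : SimpleGraph W}
    {A : Set V} {B : Set W} (e : G.induce A ≃g G'.induce B) {S : Set V} (hS : S ⊆ A) :
    G'.induce (Subtype.val '' (⇑e '' (Subtype.val ⁻¹' S : Set A))) ≃g G.induce S := by
  have h1 : Subtype.val '' (Subtype.val ⁻¹' S : Set A) = S := by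
    rw [Subtype.image_preimage_coe]
    exact Set.inter_eq_right.mpr hS
  have h2 := induceInduce G A (Subtype.val ⁻¹' S)
  rw [h1] at h2
  exact ((induceInduce G' B _).symm.trans (isoInduce e _).symm).trans h2

/-- Key step: if `T` avoids `σ v` and `G'[T] ≅ G[S]` with `S` an anchor, then `v ∉ S`
and `T` is determined by the deletion isomorphism `e`. -/
lemma uniq_step {V W : Type} {G : SimpleGraph V} {G' : SimpleGraph W}
    {v : V} {w : W} (e : G.induce ({v}ᶜ : Set V) ≃g G'.induce ({w}ᶜ : Set W))
    {S : Set V} (hanch : IsAnchor G S)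
    {T : Set W} (hT : Nonempty (G'.induce T ≃g G.induce S)) (hw : w ∉ T) :
    v ∉ S ∧ T = Subtype.val '' (⇑e '' (Subtype.val ⁻¹' S : Set ({v}ᶜ : Set V))) := by
  have hTsub : T ⊆ ({w}ᶜ : Set W) := fun x hx => by
    simp only [Set.mem_compl_iff, Set.mem_singleton_iff]
    rintro rfl; exact hw hx
  -- pull T back through e.symm
  set U : Set V := Subtype.val '' (⇑e.symm '' (Subtype.val ⁻¹' T : Set ({w}ᶜ : Set W))) with hU
  have hiso : Nonempty (G.induce U ≃g G.induce S) :=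
    ⟨(pullIso e.symm hTsub).trans hT.some⟩
  have hUS : U = S := hanch.2 U hiso
  have hUsub : U ⊆ ({v}ᶜ : Set V) := by
    rintro x ⟨y, _, rfl⟩; exact y.2
  have hvS : v ∉ S := by
    intro h
    have : v ∈ ({v}ᶜ : Set V) := hUsub (hUS ▸ h)
    simp at this
  refine ⟨hvS, ?_⟩
  -- recover T from U = S
  have h1 : (Subtype.val ⁻¹' S : Set ({v}ᶜ : Set V)) =
      ⇑e.symm '' (Subtype.val ⁻¹' T : Set ({w}ᶜ : Set W)) := by
    rw [← hUS, hU, Set.preimage_image_eq _ Subtype.val_injective]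
  rw [h1]
  have h3 : ⇑e '' (⇑e.symm '' (Subtype.val ⁻¹' T : Set ({w}ᶜ : Set W)))
      = (Subtype.val ⁻¹' T : Set ({w}ᶜ : Set W)) := by
    rw [show (⇑e : _ → _) = ⇑e.toEquiv from rfl,
        show (⇑e.symm : _ → _) = ⇑e.toEquiv.symm from rfl,
        Equiv.image_symm_image]
  rw [h3, Subtype.image_preimage_coe]
  exact (Set.inter_eq_right.mpr hTsub).symm

/-- If `G` and `G′` are hypomorphic graphs on `n ≥ 3` vertices
and `S` is an anchor of `G`, then there is exactly one subset `T ⊆ V(G′)` with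
`G′[T] ≅ G[S]`. -/
theorem stmt_10 {V W : Type} [Fintype V] [Fintype W]
    (G : SimpleGraph V) (G' : SimpleGraph W)
    (hcard : 3 ≤ Fintype.card V)
    (hhyp : Hypomorphic G G')
    (S : Set V) (hanch : IsAnchor G S) :
    ∃! T : Set W, Nonempty (G'.induce T ≃g G.induce S) := by
  obtain ⟨σ, hσ⟩ := hhyp
  -- existence
  obtain ⟨v₀, hv₀⟩ := Set.ne_univ_iff_exists_notMem S |>.mp hanch.1
  have hSsub : S ⊆ ({v₀}ᶜ : Set V) := fun x hx => by
    simp only [Set.mem_compl_iff, Set.mem_singleton_iff]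
    rintro rfl; exact hv₀ hx
  obtain ⟨e₀⟩ := hσ v₀
  refine ⟨Subtype.val '' (⇑e₀ '' (Subtype.val ⁻¹' S : Set ({v₀}ᶜ : Set V))), ⟨pullIso e₀ hSsub⟩, ?_⟩
  set T₀ : Set W := Subtype.val '' (⇑e₀ '' (Subtype.val ⁻¹' S : Set ({v₀}ᶜ : Set V))) with hT₀def
  have hT₀ : Nonempty (G'.induce T₀ ≃g G.induce S) := ⟨pullIso e₀ hSsub⟩
  intro T hT
  -- both T and T₀ have proper complements and are determined by any missed vertex
  have getE : ∀ w : W, Nonempty (G.induce ({σ.symm w}ᶜ : Set V) ≃g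
      G'.induce ({w}ᶜ : Set W)) := by
    intro w
    obtain ⟨e⟩ := hσ (σ.symm w)
    rw [σ.apply_symm_apply] at e
    exact ⟨e⟩
  have key : ∀ (T' : Set W), Nonempty (G'.induce T' ≃g G.induce S) →
      ∀ w ∉ T', σ.symm w ∉ S ∧
        T' = Subtype.val '' (⇑(getE w).some ''
          (Subtype.val ⁻¹' S : Set ({σ.symm w}ᶜ : Set V))) := by
    intro T' hT' w hw
    exact uniq_step (getE w).some hanch hT' hw
  -- cardinalities
  have hcardeq : ∀ (T' : Set W), Nonempty (G'.induce T' ≃g G.induce S) →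
      T'.ncard = S.ncard := by
    intro T' hT'
    have : Nonempty (T' ≃ S) := ⟨hT'.some.toEquiv⟩
    rw [← Nat.card_coe_set_eq, ← Nat.card_coe_set_eq]
    exact Nat.card_congr this.some
  by_cases hmeet : (Tᶜ ∩ T₀ᶜ).Nonempty
  · obtain ⟨w, hw1, hw2⟩ := hmeet
    have k1 := (key T hT w hw1).2
    have k2 := (key T₀ hT₀ w hw2).2
    rw [k1, k2]
  · -- complements disjoint : counting contradiction
    exfalso
    have hdisj : Disjoint Tᶜ T₀ᶜ := Set.disjoint_iff_inter_eq_empty.mpr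
      (Set.not_nonempty_iff_eq_empty.mp hmeet)
    have hsub1 : ⇑σ.symm '' Tᶜ ⊆ Sᶜ := by
      rintro x ⟨w, hw, rfl⟩
      exact (key T hT w hw).1
    have hsub2 : ⇑σ.symm '' T₀ᶜ ⊆ Sᶜ := by
      rintro x ⟨w, hw, rfl⟩
      exact (key T₀ hT₀ w hw).1
    have hdisj' : Disjoint (⇑σ.symm '' Tᶜ) (⇑σ.symm '' T₀ᶜ) :=
      (Set.disjoint_image_iff σ.symm.injective).mpr hdisj
    have hunion : (⇑σ.symm '' Tᶜ) ∪ (⇑σ.symm '' T₀ᶜ) ⊆ Sᶜ := Set.union_subset hsub1 hsub2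
    have h1 : (⇑σ.symm '' Tᶜ).ncard + (⇑σ.symm '' T₀ᶜ).ncard ≤ Sᶜ.ncard := by
      rw [← Set.ncard_union_eq hdisj' (Set.toFinite _) (Set.toFinite _)]
      exact Set.ncard_le_ncard hunion (Set.toFinite _)
    rw [Set.ncard_image_of_injective _ σ.symm.injective,
        Set.ncard_image_of_injective _ σ.symm.injective] at h1
    -- compute complement cardinalities
    have hWV : Nat.card W = Nat.card V := Nat.card_congr σ.symm
    have hcompl : ∀ (T' : Set W), Nonempty (G'.induce T' ≃g G.induce S) →
        T'ᶜ.ncard = Sᶜ.ncard := by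
      intro T' hT'
      have a1 : T'.ncard + T'ᶜ.ncard = Nat.card W := by
        rw [← Set.ncard_univ, ← Set.ncard_union_eq disjoint_compl_right
          (Set.toFinite _) (Set.toFinite _), Set.union_compl_self]
      have a2 : S.ncard + Sᶜ.ncard = Nat.card V := by
        rw [← Set.ncard_univ, ← Set.ncard_union_eq disjoint_compl_right
          (Set.toFinite _) (Set.toFinite _), Set.union_compl_self]
      have := hcardeq T' hT'
      omega
    rw [hcompl T hT, hcompl T₀ hT₀] at h1
    have hzero : Sᶜ.ncard = 0 := by omega
    have : Sᶜ = ∅ := (Set.ncard_eq_zero (Set.toFinite _)).mp hzero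
    exact hanch.1 (Set.compl_empty_iff.mp this)
end
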